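/- The LP relaxation of an MWTM instance is feasible if and only if the number of leaves of the tree is at least the number of tasks m. -/

import Mathlib

attribute [local instance] Classical.propDecidable

/-- A rooted tree on a finite vertex type `V`, given by a parent function. -/
structure OrgTree (V : Type) [Fintype V] [DecidableEq V] where
  root : V
  parent : V → V
  parent_root : parent root = root
  reach : ∀ v : V, ∃ k : ℕ, parent^[k] v = root

variable {V : Type} [Fintype V] [DecidableEq V]

/-- `T.Anc u v` : `u` is a (weak) ancestor of `v`, i.e. `u` lies on the
path from the root to `v`. -/
def OrgTree.Anc (T : OrgTree V) (u v : V) : Prop :=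
  ∃ k : ℕ, T.parent^[k] v = u

/-- A leaf is a node with no children. -/
def OrgTree.IsLeaf (T : OrgTree V) (v : V) : Prop :=
  ∀ u : V, T.parent u = v → u = v

/-- An antichain: no element is a (weak) ancestor of another distinct element. -/
def OrgTree.IsAntichain (T : OrgTree V) (S : Set V) : Prop :=
  ∀ u ∈ S, ∀ v ∈ S, u ≠ v → ¬ T.Anc u v

/-- Feasibility for the LP relaxation of the MWTM ILP:
nonnegativity, per-node sums at most 1, per-task sums equal to 1, and
for every leaf the total assignment along the root-to-leaf path at most 1. -/
def LPFeasible (T : OrgTree V) (m : ℕ) (x : V → Fin m → ℝ) : Prop :=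
  (∀ i j, 0 ≤ x i j) ∧
  (∀ i : V, ∑ j : Fin m, x i j ≤ 1) ∧
  (∀ j : Fin m, ∑ i : V, x i j = 1) ∧
  (∀ k : V, T.IsLeaf k →
    ∑ i ∈ Finset.univ.filter (fun i => T.Anc i k), ∑ j : Fin m, x i j ≤ 1)

/-- An effective leaf w.r.t. `x`: a node with a positive assignment none of
whose strict descendants has a positive assignment. -/
def EffLeaf (T : OrgTree V) (m : ℕ) (x : V → Fin m → ℝ) (i : V) : Prop :=
  (∃ j : Fin m, 0 < x i j) ∧
    ∀ v : V, T.Anc i v → v ≠ i → ∀ j : Fin m, x v j = 0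

/-! Every node has a leaf below it, so the total mass `∑ i, ∑ j, x i j = m` is at most the sum,
over the leaves, of the mass on their root paths, each of which is at most `1`. Conversely,
assigning the `m` tasks to `m` distinct leaves is feasible, because a root-to-leaf path contains
exactly one leaf. -/

open Finset

namespace OrgTree

variable (T : OrgTree V)

noncomputable def depth (v : V) : ℕ := Nat.find (T.reach v)

lemma depth_lt_of_parent_eq {u v : V} (h : T.parent u = v) (hne : u ≠ v) :
    T.depth v < T.depth u := by
  have hu : u ≠ T.root := by
    rintro rfl
    exact hne (h.symm.trans T.parent_root).symm
  have hspec : T.parent^[T.depth u] u = T.root := Nat.find_spec (T.reach u)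
  have hpos : 0 < T.depth u := Nat.pos_of_ne_zero fun h0 => hu (by rwa [h0] at hspec)
  have hv : T.parent^[T.depth u - 1] v = T.root := by
    rwa [← h, ← Function.iterate_succ_apply, Nat.succ_eq_add_one, Nat.sub_add_cancel hpos]
  exact lt_of_le_of_lt (Nat.find_le hv) (Nat.sub_lt hpos one_pos)

variable {T}

lemma anc_refl (v : V) : T.Anc v v := ⟨0, rfl⟩

lemma anc_of_parent_eq {u v : V} (h : T.parent u = v) : T.Anc v u := ⟨1, h⟩

lemma Anc.trans {a b c : V} (hab : T.Anc a b) (hbc : T.Anc b c) : T.Anc a c := by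
  obtain ⟨k, rfl⟩ := hab
  obtain ⟨l, rfl⟩ := hbc
  exact ⟨k + l, Function.iterate_add_apply _ _ _ _⟩

lemma IsLeaf.eq_of_anc {u v : V} (hu : T.IsLeaf u) (h : T.Anc u v) : u = v := by
  obtain ⟨n, hn⟩ := h
  induction n generalizing v with
  | zero => exact hn.symm
  | succ n ih =>
    rw [Function.iterate_succ_apply] at hn
    exact (hu v (ih hn).symm).symm

variable (T)

/-- A descendant of `e` of maximal depth is a leaf, since children are deeper than their parent. -/
lemma exists_isLeaf_anc (e : V) : ∃ ℓ, T.IsLeaf ℓ ∧ T.Anc e ℓ := by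
  obtain ⟨ℓ, hℓ, hmax⟩ := (univ.filter (T.Anc e)).exists_max_image T.depth
    ⟨e, mem_filter.2 ⟨mem_univ _, anc_refl e⟩⟩
  rw [mem_filter] at hℓ
  refine ⟨ℓ, fun u hu => ?_, hℓ.2⟩
  by_contra hne
  have hdesc : T.Anc e u := hℓ.2.trans (anc_of_parent_eq hu)
  exact (T.depth_lt_of_parent_eq hu hne).not_ge (hmax u (mem_filter.2 ⟨mem_univ _, hdesc⟩))

lemma sum_le_sum_isLeaf_sum_anc {M : Type*} [AddCommMonoid M] [PartialOrder M]
    [IsOrderedAddMonoid M] {w : V → M} (hw : ∀ i, 0 ≤ w i) :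
    ∑ i, w i ≤ ∑ ℓ ∈ univ.filter T.IsLeaf, ∑ i ∈ univ.filter (T.Anc · ℓ), w i := by
  rw [sum_comm' (t' := univ) (s' := fun i => (univ.filter T.IsLeaf).filter (T.Anc i))
    (by simp [and_comm])]
  refine sum_le_sum fun i _ => ?_
  obtain ⟨ℓ, hleaf, hanc⟩ := T.exists_isLeaf_anc i
  calc w i = ∑ _ℓ ∈ {ℓ}, w i := (sum_singleton _ _).symm
    _ ≤ ∑ _ℓ ∈ (univ.filter T.IsLeaf).filter (T.Anc i), w i :=
      sum_le_sum_of_subset_of_nonneg (by simp [hleaf, hanc]) fun _ _ _ => hw i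

end OrgTree

variable {T : OrgTree V} {m : ℕ}

lemma LPFeasible.le_card_isLeaf {x : V → Fin m → ℝ} (hx : LPFeasible T m x) :
    m ≤ (univ.filter T.IsLeaf).card := by
  obtain ⟨hnonneg, -, htask, hpath⟩ := hx
  have : (m : ℝ) ≤ (univ.filter T.IsLeaf).card := calc
    (m : ℝ) = ∑ i, ∑ j, x i j := by
      rw [sum_comm, sum_congr rfl fun j _ => htask j]; simp
    _ ≤ ∑ ℓ ∈ univ.filter T.IsLeaf, ∑ i ∈ univ.filter (T.Anc · ℓ), ∑ j, x i j :=
      T.sum_le_sum_isLeaf_sum_anc fun i => sum_nonneg fun j _ => hnonneg i j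
    _ ≤ ∑ _ℓ ∈ univ.filter T.IsLeaf, 1 := sum_le_sum fun ℓ hℓ => hpath ℓ (mem_filter.1 hℓ).2
    _ = (univ.filter T.IsLeaf).card := by simp
  exact_mod_cast this

lemma lpFeasible_of_injective_of_isLeaf {f : Fin m → V} (hf : Function.Injective f)
    (hleaf : ∀ j, T.IsLeaf (f j)) :
    LPFeasible T m fun i j => if f j = i then 1 else 0 := by
  have hsum_le_one (p : V → Prop) [DecidablePred p] (hp : ∀ a b, p (f a) → p (f b) → a = b) :
      ∑ j : Fin m, (if p (f j) then (1 : ℝ) else 0) ≤ 1 := by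
    rw [sum_boole]
    exact_mod_cast card_le_one.2 fun a ha b hb => hp a b (mem_filter.1 ha).2 (mem_filter.1 hb).2
  refine ⟨fun i j => ite_nonneg zero_le_one le_rfl, fun i => ?_, fun j => by simp, fun k _ => ?_⟩
  · exact hsum_le_one (· = i) fun a b ha hb => hf (ha.trans hb.symm)
  · rw [sum_comm]
    simp_rw [sum_ite_eq, mem_filter, mem_univ, true_and]
    exact hsum_le_one (T.Anc · k) fun a b ha hb =>
      hf (((hleaf a).eq_of_anc ha).trans ((hleaf b).eq_of_anc hb).symm)

/-- The LP relaxation of an MWTM instance is feasible iff the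
number of leaves of the tree is at least the number `m` of tasks. -/
theorem lp_feasible_iff_leaves (T : OrgTree V) (m : ℕ) :
    (∃ x : V → Fin m → ℝ, LPFeasible T m x) ↔
      m ≤ {v : V | T.IsLeaf v}.ncard := by
  rw [Set.ncard_eq_toFinset_card', Set.toFinset_ofPred]
  refine ⟨fun ⟨x, hx⟩ => hx.le_card_isLeaf, fun h => ?_⟩
  obtain ⟨f⟩ := Function.Embedding.nonempty_of_card_le
    (α := Fin m) (β := {v // T.IsLeaf v}) (by rwa [Fintype.card_fin, Fintype.card_subtype])
  exact ⟨_, lpFeasible_of_injective_of_isLeaf (Subtype.val_injective.comp f.injective)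
    fun j => (f j).2⟩
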